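/- Derivative of annealed transfer operator vanishes at first order: if L_T is a bounded operator on W^{3,1}(S^1) and L_δ f = ρ_δ * (L_T f) with zero-mean kernel ρ, then the operator norm of (L_δ − L_0)/δ from W^{3,1} to W^{1,1} is at most 2Cδ‖L_T‖_{W^{3,1}→W^{3,1}}, and in particular tends to 0 as δ → 0, where C = ∫_{-1}^1 ∫_{[0,z]} ρ(z)|z−y| dy dz. -/

import Mathlib

/-!
Write `g = L_T f`. Since `ρ_δ` has unit mass and zero mean,
`(ρ_δ * g - g)(x) = ∫ ρ_δ(y) (g(x - y) - g(x) + y g'(x)) dy`. Taylor's formula with integral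
remainder and Fubini bound the `L¹` norm of the bracket in `x` by `(y² / 2) ‖g''‖_{L¹}`, hence
`‖ρ_δ * g - g‖_{L¹} ≤ (∫ ρ_δ(y) y² / 2 dy) ‖g''‖_{L¹} = δ² C ‖g''‖_{L¹}`, and `C = ∫ ρ(z) z² / 2 dz`
because the inner integral in its definition is `z² / 2`. Convolution commutes with
differentiation, so the same estimate for `g'` bounds the derivative, and
`‖g''‖_{L¹} + ‖g'''‖_{L¹} ≤ ‖g‖_{W^{3,1}} ≤ K ‖f‖_{W^{3,1}}`.
-/

open MeasureTheory Set

/-- L¹ norm of a 1-periodic function on the circle (one period). -/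
noncomputable def l1 (f : ℝ → ℝ) : ℝ := ∫ x in Set.Ioc (0:ℝ) 1, |f x|

/-- The `W^{k,1}` norm on the circle. -/
noncomputable def Wnorm (k : ℕ) (f : ℝ → ℝ) : ℝ :=
  ∑ i ∈ Finset.range (k + 1), l1 (iteratedDeriv i f)

/-- Convolution of a kernel on ℝ with a (periodic) function. -/
noncomputable def conv (g f : ℝ → ℝ) : ℝ → ℝ := fun x => ∫ y : ℝ, g y * f (x - y)

lemma Function.Periodic.exists_abs_le_of_continuous {h : ℝ → ℝ} {c : ℝ} (hp : h.Periodic c)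
    (hc : c ≠ 0) (hcont : Continuous h) : ∃ M, ∀ x, |h x| ≤ M := by
  obtain ⟨M, hM⟩ := isBounded_iff_forall_norm_le.mp (hp.isBounded_of_continuous hc hcont)
  exact ⟨M, fun x => hM _ (mem_range_self x)⟩

lemma Function.Periodic.deriv {h : ℝ → ℝ} {c : ℝ} (hp : h.Periodic c) :
    (deriv h).Periodic c := fun x => by
  rw [← deriv_comp_add_const, funext hp]

lemma l1_nonneg (h : ℝ → ℝ) : 0 ≤ l1 h := integral_nonneg fun _ => abs_nonneg _

lemma l1_comp_sub {h : ℝ → ℝ} (hp : h.Periodic 1) (t : ℝ) :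
    l1 (fun x => h (x - t)) = l1 h := by
  have habs : Function.Periodic (fun x => |h x|) 1 := fun x => by simp only [hp x]
  simp only [l1, ← intervalIntegral.integral_of_le zero_le_one,
    intervalIntegral.integral_comp_sub_right (fun x => |h x|), zero_sub]
  simpa [sub_eq_neg_add] using habs.intervalIntegral_add_eq (-t) 0

lemma Wnorm_nonneg (k : ℕ) (h : ℝ → ℝ) : 0 ≤ Wnorm k h :=
  Finset.sum_nonneg fun _ _ => l1_nonneg _

lemma Wnorm_one (h : ℝ → ℝ) : Wnorm 1 h = l1 h + l1 (deriv h) := by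
  simp [Wnorm, Finset.sum_range_succ]

lemma l1_deriv_deriv_add_le_Wnorm_three (h : ℝ → ℝ) :
    l1 (deriv (deriv h)) + l1 (deriv (deriv (deriv h))) ≤ Wnorm 3 h := by
  simp only [Wnorm, Finset.sum_range_succ, Finset.sum_range_zero, iteratedDeriv_succ,
    iteratedDeriv_zero]
  linarith [l1_nonneg h, l1_nonneg (deriv h)]

lemma integral_uIoc_abs_sub (y : ℝ) : ∫ t in uIoc (0:ℝ) y, |y - t| = y ^ 2 / 2 := by
  rcases le_total 0 y with hy | hy
  · rw [uIoc_of_le hy, ← intervalIntegral.integral_of_le hy,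
      intervalIntegral.integral_congr fun t ht =>
        abs_of_nonneg (sub_nonneg.2 (uIcc_of_le hy ▸ ht).2),
      intervalIntegral.integral_comp_sub_left (fun x => x)]
    simp
  · rw [uIoc_of_ge hy, ← intervalIntegral.integral_of_le hy,
      intervalIntegral.integral_congr fun t ht =>
        abs_of_nonpos (sub_nonpos.2 (uIcc_of_le hy ▸ ht).1)]
    simp
    ring

noncomputable def taylorRemainder (g : ℝ → ℝ) (x y : ℝ) : ℝ := g (x - y) - g x + y * deriv g x

lemma continuous_taylorRemainder {g : ℝ → ℝ} (hg : ContDiff ℝ 1 g) :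
    Continuous fun p : ℝ × ℝ => taylorRemainder g p.1 p.2 := by
  unfold taylorRemainder
  have := hg.continuous_deriv le_rfl
  fun_prop

lemma abs_taylorRemainder_le {g : ℝ → ℝ} {M M' : ℝ} (hM : ∀ x, |g x| ≤ M)
    (hM' : ∀ x, |deriv g x| ≤ M') (x y : ℝ) : |taylorRemainder g x y| ≤ 2 * M + |y| * M' := by
  unfold taylorRemainder
  calc |g (x - y) - g x + y * deriv g x| ≤ |g (x - y)| + |g x| + |y| * |deriv g x| := by
        rw [← abs_mul]; exact (abs_add_le _ _).trans (add_le_add_left (abs_sub _ _) _)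
    _ ≤ M + M + |y| * M' := by gcongr <;> apply_assumption
    _ = 2 * M + |y| * M' := by ring

lemma taylorRemainder_eq_integral {g : ℝ → ℝ} (hg : ContDiff ℝ 2 g) (x y : ℝ) :
    taylorRemainder g x y = ∫ t in (0:ℝ)..y, (y - t) * deriv (deriv g) (x - t) := by
  have hg' : ContDiff ℝ 1 (deriv g) := hg.deriv'
  have hF : ∀ t ∈ uIcc (0:ℝ) y, HasDerivAt (fun t => g (x - t) - (y - t) * deriv g (x - t))
      ((y - t) * deriv (deriv g) (x - t)) t := by
    intro t _
    have hsub : HasDerivAt (fun t : ℝ => x - t) (-1) t := by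
      simpa using (hasDerivAt_id t).const_sub x
    have h1 : HasDerivAt (fun t => g (x - t)) (deriv g (x - t) * -1) t :=
      ((hg.differentiable two_ne_zero) (x - t)).hasDerivAt.comp t hsub
    have h2 : HasDerivAt (fun t => deriv g (x - t)) (deriv (deriv g) (x - t) * -1) t :=
      ((hg'.differentiable one_ne_zero) (x - t)).hasDerivAt.comp t hsub
    have h3 : HasDerivAt (fun t : ℝ => y - t) (-1) t := by
      simpa using (hasDerivAt_id t).const_sub y
    exact (h1.sub (h3.mul h2)).congr_deriv (by ring)
  have hint : IntervalIntegrable (fun t => (y - t) * deriv (deriv g) (x - t)) volume 0 y := by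
    have := hg'.continuous_deriv le_rfl
    exact Continuous.intervalIntegrable (by fun_prop) _ _
  rw [intervalIntegral.integral_eq_sub_of_hasDerivAt hF hint, taylorRemainder]
  simp only [sub_zero, sub_self]
  ring

lemma integrable_mul_of_eq_zero_off_Icc {κ φ : ℝ → ℝ} (hκ : Integrable κ)
    (hκ_supp : ∀ y, y ∉ Icc (-1:ℝ) 1 → κ y = 0) (hφ : Continuous φ) :
    Integrable fun y => κ y * φ y := by
  obtain ⟨M, hM⟩ := (isCompact_Icc (a := (-1:ℝ)) (b := 1)).exists_bound_of_continuousOn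
    hφ.continuousOn
  refine (hκ.norm.mul_const M).mono' (hκ.1.mul hφ.aestronglyMeasurable) (ae_of_all _ fun y => ?_)
  by_cases hy : y ∈ Icc (-1:ℝ) 1
  · rw [norm_mul]
    exact mul_le_mul_of_nonneg_left (hM y hy) (norm_nonneg _)
  · simp [hκ_supp y hy]

lemma integrable_mul_comp_sub {κ g : ℝ → ℝ} (hκ : Integrable κ) (hg : Continuous g) {M : ℝ}
    (hM : ∀ x, |g x| ≤ M) (x : ℝ) : Integrable fun y => κ y * g (x - y) :=
  hκ.mul_bdd (by fun_prop : Continuous fun y => g (x - y)).aestronglyMeasurable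
    (ae_of_all _ fun y => hM (x - y))

lemma hasDerivAt_conv {κ g : ℝ → ℝ} (hκ : Integrable κ) (hg : ContDiff ℝ 1 g) {M M' : ℝ}
    (hM : ∀ x, |g x| ≤ M) (hM' : ∀ x, |deriv g x| ≤ M') (x₀ : ℝ) :
    HasDerivAt (conv κ g) (conv κ (deriv g) x₀) x₀ := by
  have hg' : Continuous (deriv g) := hg.continuous_deriv le_rfl
  refine (hasDerivAt_integral_of_dominated_loc_of_deriv_le (F := fun x y => κ y * g (x - y))
    (F' := fun x y => κ y * deriv g (x - y)) (bound := fun y => |κ y| * M') Filter.univ_mem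
    (Filter.Eventually.of_forall fun x => (integrable_mul_comp_sub hκ hg.continuous hM x).1)
    (integrable_mul_comp_sub hκ hg.continuous hM x₀)
    (integrable_mul_comp_sub hκ hg' hM' x₀).1
    (ae_of_all _ fun y x _ => ?_) (hκ.norm.mul_const M') (ae_of_all _ fun y x _ => ?_)).2
  · rw [Real.norm_eq_abs, abs_mul]
    exact mul_le_mul_of_nonneg_left (hM' _) (abs_nonneg _)
  · have hsub : HasDerivAt (fun x : ℝ => x - y) 1 x := (hasDerivAt_id x).sub_const y
    simpa using ((hg.differentiable one_ne_zero (x - y)).hasDerivAt.comp x hsub).const_mul (κ y)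

lemma conv_sub_self_eq_integral_taylorRemainder {κ g : ℝ → ℝ} (hκ : Integrable κ)
    (hκ_supp : ∀ y, y ∉ Icc (-1:ℝ) 1 → κ y = 0) (hκ_mass : ∫ y, κ y = 1)
    (hκ_mean : ∫ y, κ y * y = 0) (hg : Continuous g) {M : ℝ} (hM : ∀ x, |g x| ≤ M) (x : ℝ) :
    conv κ g x - g x = ∫ y, κ y * taylorRemainder g x y := by
  have h₁ := integrable_mul_comp_sub hκ hg hM x
  have h₂ : Integrable fun y => κ y * g x := hκ.mul_const _
  have h₃ : Integrable fun y => κ y * y * deriv g x :=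
    (integrable_mul_of_eq_zero_off_Icc hκ hκ_supp continuous_id).mul_const _
  have h₁₂ : Integrable fun y => κ y * g (x - y) - κ y * g x := h₁.sub h₂
  simp_rw [taylorRemainder, mul_add, mul_sub, ← mul_assoc]
  rw [integral_add h₁₂ h₃, integral_sub h₁ h₂, integral_mul_const, integral_mul_const,
    hκ_mass, hκ_mean, conv]
  ring

lemma integral_abs_taylorRemainder_le {g : ℝ → ℝ} (hg : ContDiff ℝ 2 g) (hgp : g.Periodic 1)
    (y : ℝ) : ∫ x in Ioc (0:ℝ) 1, |taylorRemainder g x y| ≤ l1 (deriv (deriv g)) * (y ^ 2 / 2) := by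
  have hg'' : Continuous (deriv (deriv g)) := hg.deriv'.continuous_deriv le_rfl
  set F : ℝ → ℝ → ℝ := fun x t => |y - t| * |deriv (deriv g) (x - t)|
  have hF : Integrable (Function.uncurry F)
      ((volume.restrict (Ioc 0 1)).prod (volume.restrict (uIoc 0 y))) := by
    rw [Measure.prod_restrict]
    exact ((by fun_prop : Continuous (Function.uncurry F)).continuousOn.integrableOn_compact
      (isCompact_Icc.prod isCompact_uIcc)).mono_set (prod_mono Ioc_subset_Icc_self uIoc_subset_uIcc)
  calc ∫ x in Ioc (0:ℝ) 1, |taylorRemainder g x y|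
      ≤ ∫ x in Ioc (0:ℝ) 1, ∫ t in uIoc 0 y, F x t := by
        refine integral_mono_of_nonneg (ae_of_all _ fun _ => abs_nonneg _) hF.integral_prod_left
          (ae_of_all _ fun x => ?_)
        dsimp only
        rw [taylorRemainder_eq_integral hg]
        simpa [F, abs_mul] using intervalIntegral.norm_integral_le_integral_norm_uIoc
          (f := fun t => (y - t) * deriv (deriv g) (x - t)) (μ := volume)
    _ = ∫ t in uIoc 0 y, ∫ x in Ioc (0:ℝ) 1, F x t := integral_integral_swap hF
    _ = ∫ t in uIoc 0 y, |y - t| * l1 (deriv (deriv g)) := by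
        congr 1 with t
        rw [integral_const_mul, ← l1_comp_sub hgp.deriv.deriv t, l1]
    _ = l1 (deriv (deriv g)) * (y ^ 2 / 2) := by
        rw [integral_mul_const, integral_uIoc_abs_sub, mul_comm]

lemma integrable_mul_taylorRemainder {κ g : ℝ → ℝ} (hκ : Integrable κ)
    (hκ_supp : ∀ y, y ∉ Icc (-1:ℝ) 1 → κ y = 0) (hg : ContDiff ℝ 1 g) {M M' : ℝ}
    (hM : ∀ x, |g x| ≤ M) (hM' : ∀ x, |deriv g x| ≤ M') :
    Integrable (fun p : ℝ × ℝ => κ p.2 * taylorRemainder g p.1 p.2)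
      ((volume.restrict (Ioc (0:ℝ) 1)).prod volume) := by
  refine ((hκ.norm.comp_snd _).mul_const (2 * M + M')).mono'
    (hκ.1.comp_snd.mul (continuous_taylorRemainder hg).aestronglyMeasurable)
    (ae_of_all _ fun p => ?_)
  by_cases hy : p.2 ∈ Icc (-1:ℝ) 1
  · have hRp := abs_taylorRemainder_le hM hM' p.1 p.2
    have hy₁ : |p.2| ≤ 1 := abs_le.2 hy
    have hM'₀ : 0 ≤ M' := (abs_nonneg _).trans (hM' 0)
    rw [norm_mul]
    exact mul_le_mul_of_nonneg_left
      (hRp.trans (add_le_add_right (mul_le_of_le_one_left hM'₀ hy₁) _)) (norm_nonneg _)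
  · simp [hκ_supp _ hy]

theorem l1_conv_sub_self_le {κ g : ℝ → ℝ} (hκ : Integrable κ)
    (hκ_supp : ∀ y, y ∉ Icc (-1:ℝ) 1 → κ y = 0) (hκ_mass : ∫ y, κ y = 1)
    (hκ_mean : ∫ y, κ y * y = 0) (hg : ContDiff ℝ 2 g) (hgp : g.Periodic 1) :
    l1 (fun x => conv κ g x - g x) ≤ (∫ y, |κ y| * (y ^ 2 / 2)) * l1 (deriv (deriv g)) := by
  have hg₁ : ContDiff ℝ 1 g := hg.of_le (by norm_num)
  obtain ⟨M, hM⟩ := hgp.exists_abs_le_of_continuous one_ne_zero hg.continuous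
  obtain ⟨M', hM'⟩ := hgp.deriv.exists_abs_le_of_continuous one_ne_zero
    (hg₁.continuous_deriv le_rfl)
  have hG := integrable_mul_taylorRemainder hκ hκ_supp hg₁ hM hM'
  calc l1 (fun x => conv κ g x - g x)
      = ∫ x in Ioc (0:ℝ) 1, ‖∫ y, κ y * taylorRemainder g x y‖ := by
        simp only [l1, conv_sub_self_eq_integral_taylorRemainder hκ hκ_supp hκ_mass hκ_mean
          hg.continuous hM, Real.norm_eq_abs]
    _ ≤ ∫ x in Ioc (0:ℝ) 1, ∫ y, ‖κ y * taylorRemainder g x y‖ :=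
        integral_mono_of_nonneg (ae_of_all _ fun _ => norm_nonneg _)
          hG.integral_norm_prod_left (ae_of_all _ fun _ => norm_integral_le_integral_norm _)
    _ = ∫ y, |κ y| * ∫ x in Ioc (0:ℝ) 1, |taylorRemainder g x y| := by
        rw [integral_integral_swap hG.norm]
        simp only [norm_mul, Real.norm_eq_abs, integral_const_mul]
    _ ≤ ∫ y, |κ y| * (l1 (deriv (deriv g)) * (y ^ 2 / 2)) := by
        refine integral_mono_of_nonneg (ae_of_all _ fun _ => by positivity) ?_
          (ae_of_all _ fun y => mul_le_mul_of_nonneg_left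
            (integral_abs_taylorRemainder_le hg hgp y) (abs_nonneg _))
        exact integrable_mul_of_eq_zero_off_Icc hκ.abs (fun y hy => by simp [hκ_supp y hy])
          (by fun_prop)
    _ = (∫ y, |κ y| * (y ^ 2 / 2)) * l1 (deriv (deriv g)) := by
        rw [← integral_mul_const]
        congr 1 with y
        ring

theorem Wnorm_one_conv_sub_self_le {κ g : ℝ → ℝ} (hκ : Integrable κ)
    (hκ_supp : ∀ y, y ∉ Icc (-1:ℝ) 1 → κ y = 0) (hκ_mass : ∫ y, κ y = 1)
    (hκ_mean : ∫ y, κ y * y = 0) (hg : ContDiff ℝ 3 g) (hgp : g.Periodic 1) :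
    Wnorm 1 (fun x => conv κ g x - g x) ≤ (∫ y, |κ y| * (y ^ 2 / 2)) * Wnorm 3 g := by
  have hg' : ContDiff ℝ 2 (deriv g) := hg.deriv'
  obtain ⟨M, hM⟩ := hgp.exists_abs_le_of_continuous one_ne_zero hg.continuous
  obtain ⟨M', hM'⟩ := hgp.deriv.exists_abs_le_of_continuous one_ne_zero hg'.continuous
  have hderiv : deriv (fun x => conv κ g x - g x) = fun x => conv κ (deriv g) x - deriv g x :=
    funext fun x => ((hasDerivAt_conv hκ (hg.of_le (by norm_num)) hM hM' x).sub
      (hg.differentiable (by norm_num) x).hasDerivAt).deriv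
  have hm : 0 ≤ ∫ y, |κ y| * (y ^ 2 / 2) := integral_nonneg fun _ => by positivity
  rw [Wnorm_one, hderiv]
  calc _ ≤ (∫ y, |κ y| * (y ^ 2 / 2)) * l1 (deriv (deriv g))
          + (∫ y, |κ y| * (y ^ 2 / 2)) * l1 (deriv (deriv (deriv g))) :=
        add_le_add (l1_conv_sub_self_le hκ hκ_supp hκ_mass hκ_mean (hg.of_le (by norm_num)) hgp)
          (l1_conv_sub_self_le hκ hκ_supp hκ_mass hκ_mean hg' hgp.deriv)
    _ ≤ (∫ y, |κ y| * (y ^ 2 / 2)) * Wnorm 3 g := by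
        rw [← mul_add]
        exact mul_le_mul_of_nonneg_left (l1_deriv_deriv_add_le_Wnorm_three g) hm

lemma integral_dilate_mul (ρ φ : ℝ → ℝ) {δ : ℝ} (hδ : 0 < δ) :
    ∫ y, δ⁻¹ * ρ (y / δ) * φ y = ∫ z, ρ z * φ (δ * z) := by
  have h := Measure.integral_comp_div (fun z => ρ z * φ (δ * z)) δ
  simp only [mul_div_cancel₀ _ hδ.ne', abs_of_pos hδ, smul_eq_mul] at h
  simp_rw [mul_assoc]
  rw [integral_const_mul, h, inv_mul_cancel_left₀ hδ.ne']

lemma dilate_eq_zero_off_Icc {ρ : ℝ → ℝ} (hρ_supp : ∀ x, x ∉ Icc (-1:ℝ) 1 → ρ x = 0) {δ : ℝ}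
    (hδ : 0 < δ) (hδ₁ : δ ≤ 1) (y : ℝ) (hy : y ∉ Icc (-1:ℝ) 1) : δ⁻¹ * ρ (y / δ) = 0 := by
  refine mul_eq_zero_of_right _ (hρ_supp _ fun hyδ => hy ⟨?_, ?_⟩)
  · have := (le_div_iff₀ hδ).1 hyδ.1
    nlinarith
  · have := (div_le_one hδ).1 hyδ.2
    nlinarith

lemma integral_dilate {ρ : ℝ → ℝ} (hρ_mass : ∫ x, ρ x = 1) {δ : ℝ} (hδ : 0 < δ) :
    ∫ y, δ⁻¹ * ρ (y / δ) = 1 := by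
  simpa [hρ_mass] using integral_dilate_mul ρ (fun _ => 1) hδ

lemma integral_dilate_mul_self {ρ : ℝ → ℝ} (hρ_mean : ∫ x, x * ρ x = 0) {δ : ℝ} (hδ : 0 < δ) :
    ∫ y, δ⁻¹ * ρ (y / δ) * y = 0 := by
  rw [integral_dilate_mul ρ (fun y => y) hδ]
  simp_rw [mul_left_comm _ δ, integral_const_mul, mul_comm (ρ _), hρ_mean, mul_zero]

lemma integral_abs_dilate_mul_sq {ρ : ℝ → ℝ} (hρ_nonneg : ∀ x, 0 ≤ ρ x) {δ : ℝ} (hδ : 0 < δ) :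
    ∫ y, |δ⁻¹ * ρ (y / δ)| * (y ^ 2 / 2) = δ ^ 2 * ∫ z, ρ z * (z ^ 2 / 2) := by
  simp_rw [abs_of_nonneg (mul_nonneg (inv_nonneg.2 hδ.le) (hρ_nonneg _)),
    integral_dilate_mul ρ (fun y => y ^ 2 / 2) hδ, mul_pow, mul_div_assoc,
    mul_left_comm _ (δ ^ 2), integral_const_mul]

lemma integral_Icc_integral_uIoc_mul_abs_sub {ρ : ℝ → ℝ}
    (hρ_supp : ∀ x, x ∉ Icc (-1:ℝ) 1 → ρ x = 0) :
    ∫ z in Icc (-1:ℝ) 1, ∫ y in uIoc 0 z, ρ z * |z - y| = ∫ z, ρ z * (z ^ 2 / 2) := by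
  simp_rw [integral_const_mul, integral_uIoc_abs_sub]
  exact setIntegral_eq_integral_of_forall_compl_eq_zero fun z hz => by rw [hρ_supp z hz, zero_mul]

theorem stmt17_general (ρ : ℝ → ℝ)
    (hρ_nonneg : ∀ x, 0 ≤ ρ x)
    (hρ_supp : ∀ x, x ∉ Set.Icc (-1:ℝ) 1 → ρ x = 0)
    (hρ_int : Integrable ρ) (hρ_mass : ∫ x : ℝ, ρ x = 1)
    (hρ_mean : ∫ x : ℝ, x * ρ x = 0)
    (L_T : (ℝ → ℝ) → (ℝ → ℝ)) (K : ℝ)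
    (hLT : ∀ f : ℝ → ℝ, ContDiff ℝ 3 f → Function.Periodic f 1 →
      ContDiff ℝ 3 (L_T f) ∧ Function.Periodic (L_T f) 1 ∧
        Wnorm 3 (L_T f) ≤ K * Wnorm 3 f) :
    ∀ δ ∈ Set.Ioc (0:ℝ) 1, ∀ f : ℝ → ℝ, ContDiff ℝ 3 f → Function.Periodic f 1 →
      Wnorm 1 (fun x => conv (fun y => δ⁻¹ * ρ (y / δ)) (L_T f) x - L_T f x)
        ≤ 2 * (∫ z in Set.Icc (-1:ℝ) 1, ∫ y in Set.uIoc (0:ℝ) z, ρ z * |z - y|)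
            * δ ^ 2 * K * Wnorm 3 f := by
  rintro δ ⟨hδ, hδ₁⟩ f hf hfp
  obtain ⟨hg, hgp, hgK⟩ := hLT f hf hfp
  rw [integral_Icc_integral_uIoc_mul_abs_sub hρ_supp]
  have hC : 0 ≤ ∫ z, ρ z * (z ^ 2 / 2) :=
    integral_nonneg fun z => mul_nonneg (hρ_nonneg z) (by positivity)
  have hKf : 0 ≤ K * Wnorm 3 f := (Wnorm_nonneg 3 _).trans hgK
  calc _ ≤ (∫ y, |δ⁻¹ * ρ (y / δ)| * (y ^ 2 / 2)) * Wnorm 3 (L_T f) :=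
        Wnorm_one_conv_sub_self_le ((hρ_int.comp_div hδ.ne').const_mul δ⁻¹)
          (dilate_eq_zero_off_Icc hρ_supp hδ hδ₁) (integral_dilate hρ_mass hδ)
          (integral_dilate_mul_self hρ_mean hδ) hg hgp
    _ ≤ δ ^ 2 * (∫ z, ρ z * (z ^ 2 / 2)) * (K * Wnorm 3 f) := by
        rw [integral_abs_dilate_mul_sq hρ_nonneg hδ]
        gcongr
    _ ≤ 2 * (∫ z, ρ z * (z ^ 2 / 2)) * δ ^ 2 * K * Wnorm 3 f := by
        linarith [mul_nonneg (mul_nonneg (sq_nonneg δ) hC) hKf]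

/-- First derivative operator vanishes: if `L_T` is bounded on `W^{3,1}(S¹)` (with norm `K`)
and `L_δ f = ρ_δ * (L_T f)` with a zero-mean kernel, then
`‖(L_δ − L_0) f‖_{W^{1,1}} ≤ 2 C δ² K ‖f‖_{W^{3,1}}`, i.e. the operator norm of
`(L_δ − L_0)/δ : W^{3,1} → W^{1,1}` is at most `2 C δ K`, where
`C = ∫_{-1}^1 ∫_{[0,z]} ρ(z)|z−y| dy dz`. -/
theorem stmt17 (ρ : ℝ → ℝ)
    (hρ_nonneg : ∀ x, 0 ≤ ρ x)
    (hρ_supp : ∀ x, x ∉ Set.Icc (-1:ℝ) 1 → ρ x = 0)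
    (hρ_int : Integrable ρ) (hρ_mass : ∫ x : ℝ, ρ x = 1)
    (hρ_mean : ∫ x : ℝ, x * ρ x = 0)
    (L_T : (ℝ → ℝ) → (ℝ → ℝ)) (K : ℝ) (hK : 0 ≤ K)
    (hLT : ∀ f : ℝ → ℝ, ContDiff ℝ 3 f → Function.Periodic f 1 →
      ContDiff ℝ 3 (L_T f) ∧ Function.Periodic (L_T f) 1 ∧
        Wnorm 3 (L_T f) ≤ K * Wnorm 3 f) :
    ∀ δ ∈ Set.Ioc (0:ℝ) 1, ∀ f : ℝ → ℝ, ContDiff ℝ 3 f → Function.Periodic f 1 →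
      Wnorm 1 (fun x => conv (fun y => δ⁻¹ * ρ (y / δ)) (L_T f) x - L_T f x)
        ≤ 2 * (∫ z in Set.Icc (-1:ℝ) 1, ∫ y in Set.uIoc (0:ℝ) z, ρ z * |z - y|)
            * δ ^ 2 * K * Wnorm 3 f :=
  stmt17_general ρ hρ_nonneg hρ_supp hρ_int hρ_mass hρ_mean L_T K hLT
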